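/- Let 0 < θ₁ ≤ θ₂, w₁ = (2θ₂ − θ₁)/θ₂, w₂ = (θ₂ − θ₁)/θ₂, and define the MSReLU function ξ(z) = w₁(ReLU(z − θ₁) − ReLU(−z − θ₁)) − w₂(ReLU(z − θ₂) − ReLU(−z − θ₂)). Then for all z ∈ ℝ, |ξ(z)| ≥ |ST_{θ₁}(z)|, where ST_θ(z) = sign(z)·max(|z| − θ, 0) is the soft thresholding function; that is, MSReLU output magnitudes dominate those of soft thresholding with the same lower threshold. -/

import Mathlib

/-!
Write `S θ z = ReLU(z - θ) - ReLU(-z - θ)`, which is soft thresholding at `θ`. Since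
`w₁ = 1 + w₂`, the MSReLU is `ξ = S θ₁ + w₂ (S θ₁ - S θ₂)`, and for `θ₁ ≤ θ₂` the correction
`S θ₁ z - S θ₂ z` has the sign of `S θ₁ z`, so adding it with the weight `w₂ ≥ 0` can only
increase the magnitude.
-/

def softThreshold (θ z : ℝ) : ℝ := max (z - θ) 0 - max (-z - θ) 0

lemma sign_mul_max_abs_sub_eq_softThreshold {θ : ℝ} (hθ : 0 ≤ θ) (z : ℝ) :
    Real.sign z * max (|z| - θ) 0 = softThreshold θ z := by
  unfold softThreshold
  rcases lt_trichotomy z 0 with hz | rfl | hz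
  · rw [Real.sign_of_neg hz, abs_of_neg hz, max_eq_right (by linarith : z - θ ≤ 0)]
    ring
  · simp [max_eq_right (neg_nonpos.mpr hθ)]
  · rw [Real.sign_of_pos hz, abs_of_pos hz, max_eq_right (by linarith : -z - θ ≤ 0)]
    ring

lemma softThreshold_mul_sub_softThreshold_nonneg {θ₁ θ₂ : ℝ} (hθ₁ : 0 ≤ θ₁) (h : θ₁ ≤ θ₂)
    (z : ℝ) : 0 ≤ softThreshold θ₁ z * (softThreshold θ₁ z - softThreshold θ₂ z) := by
  unfold softThreshold
  rcases le_total z 0 with hz | hz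
  · rw [max_eq_right (by linarith : z - θ₁ ≤ 0), max_eq_right (by linarith : z - θ₂ ≤ 0)]
    have hmono : max (-z - θ₂) 0 ≤ max (-z - θ₁) 0 := max_le_max (by linarith) le_rfl
    nlinarith [le_max_right (-z - θ₁) 0]
  · rw [max_eq_right (by linarith : -z - θ₁ ≤ 0), max_eq_right (by linarith : -z - θ₂ ≤ 0)]
    have hmono : max (z - θ₂) 0 ≤ max (z - θ₁) 0 := max_le_max (by linarith) le_rfl
    nlinarith [le_max_right (z - θ₁) 0]

lemma abs_le_abs_add_mul_of_mul_nonneg {a d w : ℝ} (hw : 0 ≤ w) (had : 0 ≤ a * d) :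
    |a| ≤ |a + w * d| :=
  sq_le_sq.mp (by nlinarith [mul_nonneg hw had, mul_nonneg hw (mul_nonneg hw (sq_nonneg d))])

/-- MSReLU output magnitudes dominate those of soft thresholding with the same
lower threshold: `|ξ(z)| ≥ |ST_{θ₁}(z)|` for all `z`. -/
theorem stmt16 (θ₁ θ₂ : ℝ) (h1 : 0 < θ₁) (h2 : θ₁ ≤ θ₂)
    (w₁ w₂ : ℝ) (hw1 : w₁ = (2 * θ₂ - θ₁) / θ₂) (hw2 : w₂ = (θ₂ - θ₁) / θ₂)
    (ξ : ℝ → ℝ)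
    (hξ : ∀ z, ξ z = w₁ * (max (z - θ₁) 0 - max (-z - θ₁) 0)
      - w₂ * (max (z - θ₂) 0 - max (-z - θ₂) 0))
    (ST : ℝ → ℝ) (hST : ∀ z, ST z = Real.sign z * max (|z| - θ₁) 0) :
    ∀ z, |ST z| ≤ |ξ z| := by
  intro z
  have hθ₂ : 0 < θ₂ := h1.trans_le h2
  have hw : w₁ = 1 + w₂ := by
    rw [hw1, hw2]
    field_simp
    ring
  have hw₂ : 0 ≤ w₂ := hw2 ▸ div_nonneg (sub_nonneg.mpr h2) hθ₂.le
  have hξz : ξ z = softThreshold θ₁ z + w₂ * (softThreshold θ₁ z - softThreshold θ₂ z) := by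
    rw [hξ z, hw]
    unfold softThreshold
    ring
  rw [hST z, sign_mul_max_abs_sub_eq_softThreshold h1.le, hξz]
  exact abs_le_abs_add_mul_of_mul_nonneg hw₂
    (softThreshold_mul_sub_softThreshold_nonneg h1.le h2 z)
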